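/- The infimum in the definition of the bisimulation distance is attained: for any distributions μ, ν over the states of an input-enabled probabilistic automaton with finite state set, μ ∼_{D_b(μ,ν)} ν, where D_b(μ,ν) = inf{ε ≥ 0 : μ ∼_ε ν}. -/

import Mathlib

open Finset

structure ProbDist (S : Type) [Fintype S] where
  f : S → ℝ
  nonneg : ∀ s, 0 ≤ f s
  sum_one : ∑ s, f s = 1

/-- Probability assigned by a distribution to a set of states. -/
noncomputable def ProbDist.pr {S : Type} [Fintype S] (μ : ProbDist S) (C : Set S) : ℝ :=
  ∑ s, C.indicator μ.f s

/-- μ(A) := Σ_{s : L s = A} μ(s). -/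
noncomputable def pOf {S AP : Type} [Fintype S] (L : S → Finset AP) (μ : ProbDist S)
    (A : Finset AP) : ℝ :=
  μ.pr {s | L s = A}

/-- d_AP(μ,ν) := (1/2) Σ_{A ⊆ AP} |μ(A) − ν(A)|. -/
noncomputable def dAP {S AP : Type} [Fintype S] [Fintype AP] [DecidableEq AP]
    (L : S → Finset AP) (μ ν : ProbDist S) : ℝ :=
  (1 / 2) * ∑ A : Finset AP, |pOf L μ A - pOf L ν A|

/-- A (Segala) probabilistic automaton, image-finite. -/
structure PA (S Act AP : Type) [Fintype S] where
  trans : S → Act → ProbDist S → Prop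
  L : S → Finset AP
  imageFinite : ∀ s a, {μ | trans s a μ}.Finite

def PA.InputEnabled {S Act AP : Type} [Fintype S] (M : PA S Act AP) : Prop :=
  ∀ s a, ∃ μ, M.trans s a μ

noncomputable def PA.probOf {S Act AP : Type} [Fintype S] (M : PA S Act AP)
    (μ : ProbDist S) (A : Finset AP) : ℝ := pOf M.L μ A

/-- Combined transition s --a-->_P μ : μ is a convex combination of one-step successors. -/
def Combined {S Act AP : Type} [Fintype S] (M : PA S Act AP) (s : S) (a : Act)
    (μ : ProbDist S) : Prop :=
  ∃ (n : ℕ) (p : Fin n → ℝ) (ν : Fin n → ProbDist S),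
    (∀ i, 0 ≤ p i) ∧ (∑ i, p i = 1) ∧ (∀ i, M.trans s a (ν i)) ∧
    (∀ t, μ.f t = ∑ i, p i * (ν i).f t)

/-- Lifted transition μ --a--> μ' between distributions. -/
def Lifted {S Act AP : Type} [Fintype S] (M : PA S Act AP) (μ : ProbDist S) (a : Act)
    (μ' : ProbDist S) : Prop :=
  ∃ k : S → ProbDist S, (∀ s, 0 < μ.f s → Combined M s a (k s)) ∧
    (∀ t, μ'.f t = ∑ s, μ.f s * (k s).f t)

/-- ProbDist S carries the topology inherited from ℝ^{|S|}. -/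
noncomputable instance {S : Type} [Fintype S] : TopologicalSpace (ProbDist S) :=
  TopologicalSpace.induced (fun μ : ProbDist S => μ.f) inferInstance

/-- A (discounted) approximate bisimulation: a family of symmetric relations. -/
def IsApproxBisim {S Act AP : Type} [Fintype S] [Fintype AP] [DecidableEq AP]
    (M : PA S Act AP) (γ : ℝ) (R : ℝ → ProbDist S → ProbDist S → Prop) : Prop :=
  (∀ ε, Symmetric (R ε)) ∧ ∀ ε μ ν, R ε μ ν →
    dAP M.L μ ν ≤ ε ∧
    ∀ a μ', Lifted M μ a μ' → ∃ ν', Lifted M ν a ν' ∧ R (ε / γ) μ' ν'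

/-- μ ∼_ε ν. -/
def ApproxBisimilar {S Act AP : Type} [Fintype S] [Fintype AP] [DecidableEq AP]
    (M : PA S Act AP) (γ : ℝ) (ε : ℝ) (μ ν : ProbDist S) : Prop :=
  ∃ R, IsApproxBisim M γ R ∧ R ε μ ν

/-- The bisimulation distance D_b(μ,ν) = inf {ε ≥ 0 : μ ∼_ε ν}. -/
noncomputable def Db {S Act AP : Type} [Fintype S] [Fintype AP] [DecidableEq AP]
    (M : PA S Act AP) (γ : ℝ) (μ ν : ProbDist S) : ℝ :=
  sInf {ε | 0 ≤ ε ∧ ApproxBisimilar M γ ε μ ν}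

/-!
The set of triples `(ε, μ, ν)` with `μ ∼_ε ν` is closed in `ℝ × Dist(S) × Dist(S)`, because its
closure is again an approximate bisimulation. The matching step survives limits since the lifted
transition relation has closed graph (it is the continuous image of the compact set of choices of
convex combinations of the finitely many successors, input-enabledness making these choices total),
and since projecting a closed set along the compact factor `Dist(S)` gives a closed set. Hence
`{ε ≥ 0 | μ ∼_ε ν}` is closed; it contains `1` (as `d_AP ≤ 1` and `γ ≤ 1`), so it contains its
infimum.
-/

open Topology

namespace ProbDist

variable {S : Type} [Fintype S]

theorem isEmbedding_f : IsEmbedding (ProbDist.f : ProbDist S → S → ℝ) :=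
  ⟨⟨rfl⟩, fun μ ν h => by cases μ; cases ν; cases h; rfl⟩

@[ext]
theorem ext {μ ν : ProbDist S} (h : ∀ t, μ.f t = ν.f t) : μ = ν :=
  isEmbedding_f.injective (funext h)

@[fun_prop]
theorem continuous_f : Continuous (ProbDist.f : ProbDist S → S → ℝ) :=
  isEmbedding_f.continuous

theorem range_f : Set.range (ProbDist.f : ProbDist S → S → ℝ) = stdSimplex ℝ S :=
  Set.ext fun g => ⟨by rintro ⟨μ, rfl⟩; exact ⟨μ.nonneg, μ.sum_one⟩,
    fun hg => ⟨⟨g, hg.1, hg.2⟩, rfl⟩⟩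

instance : CompactSpace (ProbDist S) :=
  ⟨by rw [isEmbedding_f.isCompact_iff, Set.image_univ, range_f]; exact isCompact_stdSimplex ℝ S⟩

instance : T2Space (ProbDist S) := isEmbedding_f.t2Space

noncomputable def bind (μ : ProbDist S) (k : S → ProbDist S) : ProbDist S where
  f t := ∑ s, μ.f s * (k s).f t
  nonneg t := Finset.sum_nonneg fun s _ => mul_nonneg (μ.nonneg s) ((k s).nonneg t)
  sum_one := by
    rw [Finset.sum_comm]
    simp only [← Finset.mul_sum, sum_one, mul_one]

@[fun_prop]
theorem continuous_bind {X : Type*} [TopologicalSpace X] {f : X → ProbDist S}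
    {g : X → S → ProbDist S} (hf : Continuous f) (hg : Continuous g) :
    Continuous fun x => (f x).bind (g x) := by
  rw [isEmbedding_f.continuous_iff]
  unfold bind
  fun_prop

@[fun_prop]
theorem continuous_pr (C : Set S) : Continuous fun μ : ProbDist S => μ.pr C := by
  classical
  unfold pr
  simp only [Set.indicator_apply]
  exact continuous_finsetSum _ fun s _ => .if_const _ (by fun_prop) continuous_const

end ProbDist

section Automaton

variable {S Act AP : Type} [Fintype S] {M : PA S Act AP}

theorem combined_iff_mem_convexHull {s : S} {a : Act} {μ : ProbDist S} :
    Combined M s a μ ↔ μ.f ∈ convexHull ℝ (ProbDist.f '' {q | M.trans s a q}) := by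
  constructor
  · rintro ⟨n, p, ν, hp, hp1, hν, hμ⟩
    exact mem_convexHull_of_exists_fintype p (fun i => (ν i).f) hp hp1
      (fun i => Set.mem_image_of_mem _ (hν i)) (funext fun t => by simp [hμ t])
  · intro h
    obtain ⟨ι, _, w, z, hw, hw1, hz, hμ⟩ := mem_convexHull_iff_exists_fintype.mp h
    choose ν hν hνz using hz
    let e := (Fintype.equivFin ι).symm
    refine ⟨Fintype.card ι, w ∘ e, ν ∘ e, fun i => hw _, by simpa [e, Equiv.sum_comp] using hw1,
      fun i => hν _, fun t => ?_⟩
    rw [← hμ]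
    simp [e, hνz, Equiv.sum_comp (Fintype.equivFin ι).symm (fun i => w i * z i t)]

variable (M) in
theorem isClosed_setOf_combined (s : S) (a : Act) :
    IsClosed {μ : ProbDist S | Combined M s a μ} := by
  simp only [combined_iff_mem_convexHull]
  exact ((M.imageFinite s a).image _).isCompact_convexHull (𝕜 := ℝ) |>.isClosed.preimage
    ProbDist.continuous_f

theorem PA.InputEnabled.exists_combined (hM : M.InputEnabled) (s : S) (a : Act) :
    ∃ μ, Combined M s a μ :=
  let ⟨μ, hμ⟩ := hM s a
  ⟨μ, combined_iff_mem_convexHull.2 (subset_convexHull ℝ _ ⟨μ, hμ, rfl⟩)⟩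

theorem lifted_iff_exists_bind (hM : M.InputEnabled) {μ μ' : ProbDist S} {a : Act} :
    Lifted M μ a μ' ↔ ∃ k : S → ProbDist S, (∀ s, Combined M s a (k s)) ∧ μ' = μ.bind k := by
  classical
  constructor
  · rintro ⟨k, hk, hμ'⟩
    choose d hd using (hM.exists_combined · a)
    refine ⟨fun s => if 0 < μ.f s then k s else d s, fun s => ?_, ?_⟩
    · dsimp only
      split_ifs with h
      exacts [hk s h, hd s]
    · ext t
      rw [hμ' t]
      refine Finset.sum_congr rfl fun s _ => ?_
      dsimp only
      split_ifs with h
      · rfl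
      · simp [le_antisymm (not_lt.1 h) (μ.nonneg s)]
  · rintro ⟨k, hk, rfl⟩
    exact ⟨k, fun s _ => hk s, fun _ => rfl⟩

theorem isClosed_setOf_lifted (hM : M.InputEnabled) (a : Act) :
    IsClosed {p : ProbDist S × ProbDist S | Lifted M p.1 a p.2} := by
  have hK : IsClosed {q : ProbDist S × (S → ProbDist S) | ∀ s, Combined M s a (q.2 s)} := by
    simp only [Set.ofPred_forall]
    exact isClosed_iInter fun s => (isClosed_setOf_combined M s a).preimage (by fun_prop)
  have hlifted : {p : ProbDist S × ProbDist S | Lifted M p.1 a p.2} =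
      (fun q : ProbDist S × (S → ProbDist S) => (q.1, q.1.bind q.2)) ''
        {q | ∀ s, Combined M s a (q.2 s)} := by
    ext ⟨μ, μ'⟩
    simp only [Set.mem_ofPred_eq, lifted_iff_exists_bind hM, Set.mem_image, Prod.mk.injEq,
      Prod.exists]
    constructor
    · rintro ⟨k, hk, rfl⟩
      exact ⟨μ, k, hk, rfl, rfl⟩
    · rintro ⟨_, k, hk, rfl, rfl⟩
      exact ⟨k, hk, rfl⟩
  rw [hlifted]
  exact (hK.isCompact.image (by fun_prop)).isClosed

end Automaton

section Labels

variable {S AP : Type} [Fintype S] [Fintype AP] [DecidableEq AP]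

theorem continuous_dAP (L : S → Finset AP) :
    Continuous fun p : ProbDist S × ProbDist S => dAP L p.1 p.2 := by
  unfold dAP pOf
  fun_prop

theorem sum_pOf (L : S → Finset AP) (μ : ProbDist S) : ∑ A, pOf L μ A = 1 := by
  classical
  unfold pOf ProbDist.pr
  rw [Finset.sum_comm]
  simp [Set.indicator_apply, μ.sum_one]

theorem dAP_le_one (L : S → Finset AP) (μ ν : ProbDist S) : dAP L μ ν ≤ 1 := by
  have hpOf_nonneg (ρ : ProbDist S) (A : Finset AP) : 0 ≤ pOf L ρ A :=
    Finset.sum_nonneg fun s _ => Set.indicator_nonneg (fun s _ => ρ.nonneg s) s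
  have habs (A : Finset AP) : |pOf L μ A - pOf L ν A| ≤ pOf L μ A + pOf L ν A :=
    abs_le.2 ⟨by linarith [hpOf_nonneg μ A], by linarith [hpOf_nonneg ν A]⟩
  calc dAP L μ ν ≤ 1 / 2 * ∑ A, (pOf L μ A + pOf L ν A) := by
        unfold dAP; gcongr with A; exact habs A
    _ = 1 := by rw [Finset.sum_add_distrib, sum_pOf, sum_pOf]; norm_num

end Labels

section Bisimulation

variable {S Act AP : Type} [Fintype S] [Fintype AP] [DecidableEq AP] {M : PA S Act AP} {γ : ℝ}

theorem isApproxBisim_approxBisimilar : IsApproxBisim M γ (ApproxBisimilar M γ) := by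
  refine ⟨fun ε μ ν ⟨R, hR, h⟩ => ⟨R, hR, hR.1 ε h⟩, fun ε μ ν ⟨R, hR, h⟩ => ?_⟩
  obtain ⟨hd, hmatch⟩ := hR.2 ε μ ν h
  refine ⟨hd, fun a μ' hμ' => ?_⟩
  obtain ⟨ν', hν', h'⟩ := hmatch a μ' hμ'
  exact ⟨ν', hν', R, hR, h'⟩

theorem approxBisimilar_one (hM : M.InputEnabled) (hγ0 : 0 < γ) (hγ1 : γ ≤ 1)
    (μ ν : ProbDist S) : ApproxBisimilar M γ 1 μ ν := by
  refine ⟨fun ε _ _ => 1 ≤ ε, ⟨fun ε _ _ h => h, fun ε μ ν hε => ⟨?_, fun a _ _ => ?_⟩⟩, le_rfl⟩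
  · exact (dAP_le_one M.L μ ν).trans hε
  · choose k hk using (hM.exists_combined · a)
    exact ⟨ν.bind k, (lifted_iff_exists_bind hM).2 ⟨k, hk, rfl⟩,
      (one_le_div hγ0).2 (hγ1.trans hε)⟩

theorem isClosed_setOf_approxBisimilar (hM : M.InputEnabled) :
    IsClosed {p : ℝ × ProbDist S × ProbDist S | ApproxBisimilar M γ p.1 p.2.1 p.2.2} := by
  set T := {p : ℝ × ProbDist S × ProbDist S | ApproxBisimilar M γ p.1 p.2.1 p.2.2}
  obtain ⟨hsymm, hstep⟩ := isApproxBisim_approxBisimilar (M := M) (γ := γ)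
  suffices IsApproxBisim M γ fun ε μ ν => (ε, μ, ν) ∈ closure T from
    closure_subset_iff_isClosed.mp fun p hp => ⟨_, this, hp⟩
  refine ⟨fun ε μ ν h => ?_, fun ε μ ν h => ⟨?_, fun a μ' hμ' => ?_⟩⟩
  · have hT : T ⊆ (fun p : ℝ × ProbDist S × ProbDist S => (p.1, p.2.2, p.2.1)) ⁻¹' closure T :=
      fun p hp => subset_closure (hsymm _ hp)
    exact closure_minimal hT (isClosed_closure.preimage (by fun_prop)) h
  · have hT : T ⊆ {p | dAP M.L p.2.1 p.2.2 ≤ p.1} := fun p hp => (hstep _ _ _ hp).1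
    have hclosed : IsClosed {p : ℝ × ProbDist S × ProbDist S | dAP M.L p.2.1 p.2.2 ≤ p.1} :=
      isClosed_le ((continuous_dAP M.L).comp continuous_snd) continuous_fst
    have hmem : (ε, μ, ν) ∈ {p : ℝ × ProbDist S × ProbDist S | dAP M.L p.2.1 p.2.2 ≤ p.1} :=
      closure_minimal hT hclosed h
    exact hmem
  · obtain ⟨k, hk, rfl⟩ := (lifted_iff_exists_bind hM).1 hμ'
    -- the matching successor `ν'` is the first, compact, coordinate and gets projected away
    let U := Prod.snd '' {q : ProbDist S × (ℝ × ProbDist S × ProbDist S) |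
        Lifted M q.2.2.2 a q.1 ∧ (q.2.1 / γ, q.2.2.1.bind k, q.1) ∈ closure T}
    have hU : IsClosed U := by
      have hlift : Continuous fun q : ProbDist S × (ℝ × ProbDist S × ProbDist S) =>
          (q.2.2.2, q.1) := by fun_prop
      have hnext : Continuous fun q : ProbDist S × (ℝ × ProbDist S × ProbDist S) =>
          (q.2.1 / γ, q.2.2.1.bind k, q.1) := by fun_prop
      exact isClosedMap_snd_of_compactSpace _
        (((isClosed_setOf_lifted hM a).preimage hlift).inter (isClosed_closure.preimage hnext))
    have hTU : T ⊆ U := by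
      rintro ⟨ε, μ, ν⟩ hp
      obtain ⟨ν', hν', h'⟩ :=
        (hstep ε μ ν hp).2 a (μ.bind k) ((lifted_iff_exists_bind hM).2 ⟨k, hk, rfl⟩)
      exact ⟨(ν', ε, μ, ν), ⟨hν', subset_closure h'⟩, rfl⟩
    obtain ⟨⟨ν', _⟩, ⟨hν', h'⟩, rfl⟩ := closure_minimal hTU hU h
    exact ⟨ν', hν', h'⟩

end Bisimulation

theorem stmt10 {S Act AP : Type} [Fintype S] [Fintype AP] [DecidableEq AP]
    (M : PA S Act AP) (hM : M.InputEnabled) (γ : ℝ) (hγ0 : 0 < γ) (hγ1 : γ ≤ 1)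
    (μ ν : ProbDist S) :
    ApproxBisimilar M γ (Db M γ μ ν) μ ν := by
  have hclosed : IsClosed {ε | 0 ≤ ε ∧ ApproxBisimilar M γ ε μ ν} :=
    isClosed_Ici.inter ((isClosed_setOf_approxBisimilar hM).preimage
      (continuous_id.prodMk continuous_const : Continuous fun ε : ℝ => (ε, μ, ν)))
  exact (hclosed.csInf_mem ⟨1, zero_le_one, approxBisimilar_one hM hγ0 hγ1 μ ν⟩
    ⟨0, fun _ h => h.1⟩).2
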